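/- arXiv:2408.09234 — 4 statements merged into one kernel-verified Lean document; each statement's English description precedes it below -/
import Mathlib

section
/- Let n, k be positive integers with n > 2k, and let ρ = (∏_{l=-k}^{k-1} (n+2l))^{-1/k}. Then the function B(y) = (1 + ρ|y|²)^{-(n-2k)/2} on ℝⁿ satisfies Δ^k B = B^{(n+2k)/(n-2k)} pointwise on ℝⁿ, where Δ = -∑ ∂ᵢ² is the (geometer's) Laplacian. -/
noncomputable section

open MeasureTheory Real

/-- The (geometer's, nonnegative) Euclidean Laplacian `Δ f = -∑ ∂ᵢ² f`. -/
def euclLap {n : ℕ} (f : EuclideanSpace ℝ (Fin n) → ℝ) (x : EuclideanSpace ℝ (Fin n)) : ℝ :=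
  -∑ i : Fin n,
    iteratedFDeriv ℝ 2 f x ![EuclideanSpace.single i 1, EuclideanSpace.single i 1]

/-- The constant `ρ_{n,k} = (∏_{l=-k}^{k-1} (n+2l))^{-1/k}`. -/
def rhoNK (n k : ℕ) : ℝ :=
  (∏ j ∈ Finset.range (2 * k), ((n : ℝ) + 2 * j - 2 * k)) ^ (-(1 : ℝ) / k)

/-- The standard Euclidean bubble `B(y) = (1 + ρ_{n,k}|y|²)^{-(n-2k)/2}`. -/
def bubble (n k : ℕ) (y : EuclideanSpace ℝ (Fin n)) : ℝ :=
  (1 + rhoNK n k * ‖y‖ ^ 2) ^ (-(((n : ℝ) - 2 * k) / 2))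

/-!
Write `X = 1 + ρ|y|²`, `b = (n - 2k)/2` and `u_m = (b)_m X^{-(b+m)}` with the rising factorial
`(b)_m`, so that `B = u_0`. A direct computation gives `Δ u_m = 4ρ ((k - 1 - m) u_{m+1} + u_{m+2})`,
and iterating, `Δ^j u_0 = (4ρ)^j ∑_{i ≤ j} C(j,i) (k-1-i)(k-2-i)⋯(k-j) u_{j+i}`. For `j = k` every
coefficient with `i < k` contains the factor `0`, so `Δ^k B = (4ρ)^k (b)_{2k} X^{-(b+2k)}`. Now
`4^k (b)_{2k} = ∏_{l=-k}^{k-1} (n+2l) = ρ^{-k}`, and `X^{-(b+2k)} = B^{(n+2k)/(n-2k)}`.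
-/

open Finset Filter Topology InnerProductSpace Laplacian Polynomial
open scoped RealInnerProductSpace

section Ladder

variable {R M : Type*} [CommRing R] [AddCommGroup M] [Module R M]

variable (R) in
def ladderCoeff (κ : R) (j i : ℕ) : R :=
  j.choose i * (descPochhammer R (j - i)).eval (κ - 1 - i)

lemma ladderCoeff_of_lt (κ : R) {j i : ℕ} (h : j < i) : ladderCoeff R κ j i = 0 := by
  simp [ladderCoeff, Nat.choose_eq_zero_of_lt h]

lemma ladderCoeff_self (κ : R) (j : ℕ) : ladderCoeff R κ j j = 1 := by
  simp [ladderCoeff]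

lemma ladderCoeff_natCast_self_of_lt {k i : ℕ} (h : i < k) :
    ladderCoeff R (k : R) k i = 0 := by
  obtain ⟨m, rfl⟩ : ∃ m, k = i + m + 1 := ⟨k - i - 1, by omega⟩
  have hsub : i + m + 1 - i = m + 1 := by omega
  have harg : ((i + m + 1 : ℕ) : R) - 1 - i = (m : R) := by push_cast; ring
  rw [ladderCoeff, hsub, harg, descPochhammer_eval_eq_descFactorial,
    Nat.descFactorial_eq_zero_iff_lt.mpr (Nat.lt_succ_self m), Nat.cast_zero, mul_zero]

lemma ladderCoeff_succ_zero (κ : R) (j : ℕ) :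
    ladderCoeff R κ (j + 1) 0 = ladderCoeff R κ j 0 * (κ - 1 - j) := by
  simp [ladderCoeff, descPochhammer_succ_eval]

lemma ladderCoeff_succ_succ (κ : R) {j i : ℕ} (hi : i ≤ j) :
    ladderCoeff R κ (j + 1) (i + 1)
      = ladderCoeff R κ j (i + 1) * (κ - 1 - (j + (i + 1) : ℕ)) + ladderCoeff R κ j i := by
  obtain ⟨l, rfl⟩ : ∃ l, j = i + l := ⟨j - i, by omega⟩
  rcases l with _ | l
  · simp [ladderCoeff_self, ladderCoeff_of_lt]
  have hpascal : ((i + (l + 1)).choose (i + 1) : R) * (i + 1)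
      = ((i + (l + 1)).choose i : R) * (l + 1) := by
    have := Nat.choose_succ_right_eq (i + (l + 1)) i
    rw [Nat.add_sub_cancel_left] at this
    exact_mod_cast congrArg (Nat.cast (R := R)) this
  have h1 : i + (l + 1) + 1 - (i + 1) = l + 1 := by omega
  have h2 : i + (l + 1) - (i + 1) = l := by omega
  have h3 : i + (l + 1) - i = l + 1 := by omega
  have hshift : κ - 1 - i = (κ - 1 - (i + 1 : ℕ)) + 1 := by push_cast; ring
  simp only [ladderCoeff, h1, h2, h3]
  rw [hshift, descPochhammer_succ_eval, descPochhammer_succ_left, eval_mul, eval_comp,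
    Nat.choose_succ_succ (i + (l + 1)) i]
  simp only [eval_X, eval_sub, eval_one, add_sub_cancel_right]
  push_cast
  linear_combination (descPochhammer R l).eval (κ - 1 - (i + 1)) * hpascal

lemma sum_ladderCoeff_smul_succ (κ : R) (u : ℕ → M) (j : ℕ) :
    ∑ i ∈ range (j + 1),
        ladderCoeff R κ j i • ((κ - 1 - (j + i : ℕ)) • u (j + i + 1) + u (j + i + 2))
      = ∑ i ∈ range (j + 2), ladderCoeff R κ (j + 1) i • u (j + 1 + i) := by
  set F : ℕ → M := fun i => (ladderCoeff R κ j i * (κ - 1 - (j + i : ℕ))) • u (j + i + 1)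
  have hF : ∑ i ∈ range (j + 1), F i = ∑ i ∈ range (j + 1), F (i + 1) + F 0 := by
    rw [← sum_range_succ' F (j + 1), sum_range_succ F (j + 1), left_eq_add]
    simp [F, ladderCoeff_of_lt κ (Nat.lt_succ_self j)]
  simp only [smul_add, smul_smul, sum_add_distrib]
  rw [hF, sum_range_succ' (fun i => ladderCoeff R κ (j + 1) i • u (j + 1 + i)), add_right_comm,
    ← sum_add_distrib]
  congr 1
  · refine sum_congr rfl fun i hi => ?_
    rw [ladderCoeff_succ_succ κ (Nat.lt_succ_iff.mp (mem_range.mp hi)), add_smul]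
    simp only [F]
    congr 3 <;> omega
  · simp [F, ladderCoeff_succ_zero]

/-- `L` need only be linear on combinations of the `u m`, since the Laplacian is linear on `C²`
functions only. -/
theorem iterate_apply_eq_sum_ladderCoeff (L : M → M) (u : ℕ → M) (c κ : R)
    (hL : ∀ (s : Finset ℕ) (a : ℕ → R) (m : ℕ → ℕ),
      L (∑ i ∈ s, a i • u (m i)) = ∑ i ∈ s, a i • L (u (m i)))
    (hu : ∀ m, L (u m) = c • ((κ - 1 - m) • u (m + 1) + u (m + 2))) (j : ℕ) :
    L^[j] (u 0) = c ^ j • ∑ i ∈ range (j + 1), ladderCoeff R κ j i • u (j + i) := by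
  induction j with
  | zero => simp [ladderCoeff_self]
  | succ j ih =>
    rw [Function.iterate_succ_apply', ih, smul_sum]
    simp only [smul_smul]
    rw [hL, ← sum_ladderCoeff_smul_succ, smul_sum]
    refine sum_congr rfl fun i _ => ?_
    rw [hu, smul_smul, smul_smul, pow_succ]
    ring_nf

theorem iterate_ladder_eq (L : M → M) (u : ℕ → M) (c : R) (k : ℕ)
    (hL : ∀ (s : Finset ℕ) (a : ℕ → R) (m : ℕ → ℕ),
      L (∑ i ∈ s, a i • u (m i)) = ∑ i ∈ s, a i • L (u (m i)))
    (hu : ∀ m, L (u m) = c • (((k : R) - 1 - m) • u (m + 1) + u (m + 2))) :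
    L^[k] (u 0) = c ^ k • u (2 * k) := by
  rw [iterate_apply_eq_sum_ladderCoeff L u c k hL hu, sum_range_succ, ladderCoeff_self,
    sum_eq_zero fun i hi => by rw [ladderCoeff_natCast_self_of_lt (mem_range.mp hi), zero_smul],
    zero_add, one_smul, two_mul]

end Ladder

theorem hasDerivAt_one_add_mul_rpow {ρ t : ℝ} (p : ℝ) (ht : 1 + ρ * t ≠ 0) :
    HasDerivAt (fun s => (1 + ρ * s) ^ p) (p * ρ * (1 + ρ * t) ^ (p - 1)) t := by
  have hlin : HasDerivAt (fun s => 1 + ρ * s) ρ t := by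
    simpa using ((hasDerivAt_id t).const_mul ρ).const_add 1
  have h := (Real.hasDerivAt_rpow_const (p := p) (Or.inl ht)).comp t hlin
  rwa [mul_right_comm] at h

section EuclideanCalculus

variable {E : Type*} [NormedAddCommGroup E] [InnerProductSpace ℝ E]

theorem HasDerivAt.hasFDerivAt_comp_norm_sq {g : ℝ → ℝ} {g' : ℝ} {x : E}
    (hg : HasDerivAt g g' (‖x‖ ^ 2)) :
    HasFDerivAt (fun y => g (‖y‖ ^ 2)) (g' • (2 • innerSL ℝ x)) x :=
  hg.comp_hasFDerivAt x (hasStrictFDerivAt_norm_sq x).hasFDerivAt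

theorem iteratedFDeriv_two_comp_norm_sq_apply {g g' g'' : ℝ → ℝ} {x : E}
    (hg : ∀ᶠ t in 𝓝 (‖x‖ ^ 2), HasDerivAt g (g' t) t)
    (hg' : HasDerivAt g' (g'' (‖x‖ ^ 2)) (‖x‖ ^ 2)) (v : E) :
    iteratedFDeriv ℝ 2 (fun y => g (‖y‖ ^ 2)) x ![v, v]
      = 4 * ⟪x, v⟫ ^ 2 * g'' (‖x‖ ^ 2) + 2 * ‖v‖ ^ 2 * g' (‖x‖ ^ 2) := by
  have hfirst : fderiv ℝ (fun y => g (‖y‖ ^ 2)) =ᶠ[𝓝 x]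
      fun y => g' (‖y‖ ^ 2) • (2 • innerSL ℝ y) := by
    filter_upwards [((continuous_norm.pow 2).tendsto x).eventually hg] with y hy
    exact hy.hasFDerivAt_comp_norm_sq.fderiv
  have hlin : HasFDerivAt (fun y : E => 2 • innerSL ℝ y) (2 • innerSL ℝ) x :=
    (innerSL ℝ).hasFDerivAt.const_smul 2
  have hsecond := hg'.hasFDerivAt_comp_norm_sq.fun_smul hlin
  rw [iteratedFDeriv_two_apply, hfirst.fderiv_eq, hsecond.fderiv]
  simp only [Matrix.cons_val_zero, Matrix.cons_val_one, Matrix.cons_val_fin_one, add_apply,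
    smul_apply, ContinuousLinearMap.smulRight_apply, coe_innerSL_apply, nsmul_eq_mul,
    Nat.cast_ofNat, smul_eq_mul]
  rw [innerSL_apply_apply, real_inner_self_eq_norm_sq]
  ring

theorem contDiff_one_add_mul_norm_sq_rpow {ρ : ℝ} (hρ : 0 ≤ ρ) (p : ℝ) {m : WithTop ℕ∞} :
    ContDiff ℝ m fun y : E => (1 + ρ * ‖y‖ ^ 2) ^ p :=
  (contDiff_const.add (contDiff_const.mul (contDiff_norm_sq ℝ))).rpow_const_of_ne
    fun y => by positivity

/-- The functions `u_m` of the proof sketch above; the factor `(b)_m` makes both coefficients in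
`neg_laplacian_bubbleLadder` independent of `b`. -/
def bubbleLadder (ρ b : ℝ) (m : ℕ) : E → ℝ :=
  (ascPochhammer ℝ m).eval b • fun y => (1 + ρ * ‖y‖ ^ 2) ^ (-(b + m))

theorem contDiff_bubbleLadder {ρ : ℝ} (hρ : 0 ≤ ρ) (b : ℝ) (m : ℕ) {l : WithTop ℕ∞} :
    ContDiff ℝ l (bubbleLadder ρ b m : E → ℝ) :=
  (contDiff_one_add_mul_norm_sq_rpow hρ (-(b + m))).const_smul ((ascPochhammer ℝ m).eval b)

variable [FiniteDimensional ℝ E]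

theorem laplacian_sum_smul {ι : Type*} (s : Finset ι) (c : ι → ℝ) {f : ι → E → ℝ}
    (hf : ∀ i ∈ s, ContDiff ℝ 2 (f i)) :
    Δ (∑ i ∈ s, c i • f i) = ∑ i ∈ s, c i • Δ (f i) := by
  classical
  induction s using Finset.induction_on with
  | empty => exact laplacian_const
  | insert a s ha ih =>
    ext x
    have hs : ∀ i ∈ s, ContDiff ℝ 2 (f i) := fun i hi => hf i (mem_insert_of_mem hi)
    have ha' := hf a (mem_insert_self a s)
    have hsum : ContDiff ℝ 2 (∑ i ∈ s, c i • f i) := by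
      rw [sum_fn]; exact ContDiff.sum fun i hi => (hs i hi).const_smul (c i)
    have hsmul : ContDiff ℝ 2 (c a • f a) := ha'.const_smul (c a)
    rw [sum_insert ha, sum_insert ha, hsmul.contDiffAt.laplacian_add hsum.contDiffAt,
      laplacian_smul _ ha'.contDiffAt, ih hs]
    rfl

theorem laplacian_comp_norm_sq {g g' g'' : ℝ → ℝ} {x : E}
    (hg : ∀ᶠ t in 𝓝 (‖x‖ ^ 2), HasDerivAt g (g' t) t)
    (hg' : HasDerivAt g' (g'' (‖x‖ ^ 2)) (‖x‖ ^ 2)) :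
    Δ (fun y : E => g (‖y‖ ^ 2)) x
      = 4 * ‖x‖ ^ 2 * g'' (‖x‖ ^ 2) + 2 * Module.finrank ℝ E * g' (‖x‖ ^ 2) := by
  rw [laplacian_eq_iteratedFDeriv_stdOrthonormalBasis]
  simp only [iteratedFDeriv_two_comp_norm_sq_apply hg hg', OrthonormalBasis.norm_eq_one,
    sum_add_distrib, ← sum_mul, ← mul_sum, OrthonormalBasis.sum_sq_inner_left, sum_const, card_univ,
    Fintype.card_fin, nsmul_eq_mul, one_pow, mul_one]
  ring

theorem laplacian_one_add_mul_norm_sq_rpow_neg {ρ : ℝ} (hρ : 0 ≤ ρ) (a : ℝ) (x : E) :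
    Δ (fun y : E => (1 + ρ * ‖y‖ ^ 2) ^ (-a) : E → ℝ) x
      = -(2 * ρ * a * ((Module.finrank ℝ E : ℝ) - 2 * a - 2) * (1 + ρ * ‖x‖ ^ 2) ^ (-(a + 1))
          + 4 * ρ * a * (a + 1) * (1 + ρ * ‖x‖ ^ 2) ^ (-(a + 2))) := by
  have hX : 0 < 1 + ρ * ‖x‖ ^ 2 := by positivity
  have hnear : ∀ᶠ t in 𝓝 (‖x‖ ^ 2), 1 + ρ * t ≠ 0 :=
    (continuous_const.add (continuous_const.mul continuous_id)).continuousAt.eventually_ne hX.ne'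
  rw [laplacian_comp_norm_sq (g := fun t => (1 + ρ * t) ^ (-a))
    (g' := fun t => -a * ρ * (1 + ρ * t) ^ (-a - 1))
    (g'' := fun t => -a * ρ * ((-a - 1) * ρ * (1 + ρ * t) ^ (-a - 1 - 1)))
    (hnear.mono fun t ht => hasDerivAt_one_add_mul_rpow (-a) ht)
    ((hasDerivAt_one_add_mul_rpow (-a - 1) hX.ne').const_mul (-a * ρ))]
  have hstep : (1 + ρ * ‖x‖ ^ 2) ^ (-(a + 1))
      = (1 + ρ * ‖x‖ ^ 2) ^ (-(a + 2)) * (1 + ρ * ‖x‖ ^ 2) := by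
    rw [← Real.rpow_add_one hX.ne']; congr 1; ring
  rw [show -a - 1 - 1 = -(a + 2) by ring, show -a - 1 = -(a + 1) by ring]
  linear_combination (-4 * ρ * a * (a + 1)) * hstep

theorem neg_laplacian_bubbleLadder {ρ b : ℝ} (hρ : 0 ≤ ρ) {k : ℕ}
    (hd : (Module.finrank ℝ E : ℝ) = 2 * b + 2 * k) (m : ℕ) :
    -Δ (bubbleLadder ρ b m : E → ℝ)
      = (4 * ρ) • (((k : ℝ) - 1 - m) • bubbleLadder ρ b (m + 1) + bubbleLadder ρ b (m + 2)) := by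
  ext x
  simp only [bubbleLadder, Pi.neg_apply, Pi.smul_apply, Pi.add_apply, smul_eq_mul]
  rw [laplacian_smul _ (contDiff_one_add_mul_norm_sq_rpow hρ _).contDiffAt,
    laplacian_one_add_mul_norm_sq_rpow_neg hρ, hd, ascPochhammer_succ_eval,
    ascPochhammer_succ_eval (m + 1), ascPochhammer_succ_eval m]
  push_cast
  ring_nf

end EuclideanCalculus

theorem euclLap_eq_neg_laplacian {n : ℕ} (f : EuclideanSpace ℝ (Fin n) → ℝ) :
    euclLap f = -Δ f := by
  rw [laplacian_eq_iteratedFDeriv_orthonormalBasis f (EuclideanSpace.basisFun (Fin n) ℝ)]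
  ext x
  simp [euclLap, EuclideanSpace.basisFun_apply]

theorem ascPochhammer_eval_eq_prod_range {R : Type*} [CommSemiring R] (m : ℕ) (x : R) :
    (ascPochhammer R m).eval x = ∏ j ∈ range m, (x + j) := by
  induction m with
  | zero => simp
  | succ m ih => rw [ascPochhammer_succ_eval, ih, prod_range_succ]

section Rho

variable {n k : ℕ}

theorem prod_rhoNK_pos (hnk : 2 * k < n) :
    0 < ∏ j ∈ range (2 * k), ((n : ℝ) + 2 * j - 2 * k) := by
  have hnk' : (2 * k : ℝ) < n := by exact_mod_cast hnk
  exact prod_pos fun j _ => by have : (0 : ℝ) ≤ j := j.cast_nonneg; linarith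

theorem rhoNK_nonneg (hnk : 2 * k < n) : 0 ≤ rhoNK n k :=
  Real.rpow_nonneg (prod_rhoNK_pos hnk).le _

theorem rhoNK_pow_mul_prod (hnk : 2 * k < n) :
    rhoNK n k ^ k * ∏ j ∈ range (2 * k), ((n : ℝ) + 2 * j - 2 * k) = 1 := by
  rcases Nat.eq_zero_or_pos k with rfl | hk
  · simp
  have hP := prod_rhoNK_pos hnk
  rw [rhoNK, ← Real.rpow_natCast, ← Real.rpow_mul hP.le,
    div_mul_cancel₀ _ (by exact_mod_cast hk.ne'), Real.rpow_neg_one, inv_mul_cancel₀ hP.ne']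

theorem four_mul_rhoNK_pow_mul_ascPochhammer_eval (hnk : 2 * k < n) :
    (4 * rhoNK n k) ^ k * (ascPochhammer ℝ (2 * k)).eval (((n : ℝ) - 2 * k) / 2) = 1 := by
  have hfour : (4 : ℝ) ^ k = ∏ _j ∈ range (2 * k), 2 := by
    rw [prod_const, card_range, pow_mul]; norm_num
  rw [← rhoNK_pow_mul_prod hnk, mul_comm 4, mul_pow, mul_assoc]
  congr 1
  rw [ascPochhammer_eval_eq_prod_range, hfour, ← prod_mul_distrib]
  exact prod_congr rfl fun j _ => by ring

theorem bubble_rpow_critical_exponent (hnk : 2 * k < n) (y : EuclideanSpace ℝ (Fin n)) :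
    bubble n k y ^ (((n : ℝ) + 2 * k) / ((n : ℝ) - 2 * k))
      = (1 + rhoNK n k * ‖y‖ ^ 2) ^ (-(((n : ℝ) - 2 * k) / 2 + (2 * k : ℕ))) := by
  have hne : (n : ℝ) - 2 * k ≠ 0 := by
    have : (2 * k : ℝ) < n := by exact_mod_cast hnk
    linarith
  rw [bubble, ← Real.rpow_mul (by have := rhoNK_nonneg hnk; positivity)]
  congr 1
  push_cast
  field_simp
  ring

end Rho

theorem bubble_satisfies_critical_equation_general (n k : ℕ) (hnk : 2 * k < n) :
    ∀ y : EuclideanSpace ℝ (Fin n),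
      (euclLap^[k] (bubble n k)) y
        = bubble n k y ^ (((n : ℝ) + 2 * k) / ((n : ℝ) - 2 * k)) := by
  intro y
  have hρ := rhoNK_nonneg hnk
  have hd : (Module.finrank ℝ (EuclideanSpace ℝ (Fin n)) : ℝ)
      = 2 * (((n : ℝ) - 2 * k) / 2) + 2 * k := by
    simp only [finrank_euclideanSpace, Fintype.card_fin]; ring
  have hbubble : bubble n k = bubbleLadder (rhoNK n k) (((n : ℝ) - 2 * k) / 2) 0 := by
    ext; simp [bubble, bubbleLadder]
  rw [hbubble, iterate_ladder_eq euclLap _ (4 * rhoNK n k) k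
    (fun s a m => by
      simp only [euclLap_eq_neg_laplacian,
        laplacian_sum_smul s a fun i _ => contDiff_bubbleLadder hρ _ (m i), smul_neg,
        sum_neg_distrib])
    (fun m => by rw [euclLap_eq_neg_laplacian, neg_laplacian_bubbleLadder hρ hd]),
    ← hbubble, bubble_rpow_critical_exponent hnk]
  simp only [bubbleLadder, Pi.smul_apply, smul_eq_mul, ← mul_assoc,
    four_mul_rhoNK_pow_mul_ascPochhammer_eval hnk, one_mul]

theorem bubble_satisfies_critical_equation (n k : ℕ) (hk : 1 ≤ k) (hnk : 2 * k < n) :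
    ∀ y : EuclideanSpace ℝ (Fin n),
      (euclLap^[k] (bubble n k)) y
        = bubble n k y ^ (((n : ℝ) + 2 * k) / ((n : ℝ) - 2 * k)) :=
  bubble_satisfies_critical_equation_general n k hnk
end
end

section
/- Let p > 2 be a real number. There exist a constant C > 0 and an exponent θ with 0 < θ < min(1, p−2) such that for all b > 0 and a ∈ ℝ: |max(b+a,0)^{p-1} − b^{p-1} − (p−1)b^{p-2}a| ≤ C·|a|·(|a|^{p-2} + b^{p-2-θ}|a|^{θ}). -/
/-!
For `|a| ≤ b/2` the first-order Taylor remainder of `t ↦ t ^ (p-1)` at `b` is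
`O(b^(p-3) a²)`, by the mean value theorem applied to the remainder and then to the derivative
`t ^ (p-2)`; since `|a| ≤ b` and `θ ≤ 1`, `b^(p-3) a² ≤ |a| b^(p-2-θ) |a|^θ`. For `|a| ≥ b/2`
every term of the remainder is `O(|a|^(p-1))` on its own.
-/

open Real Set

theorem rpow_le_two_rpow_abs_mul_rpow {b x : ℝ} (r : ℝ) (hb : 0 < b)
    (hx : x ∈ Icc (b / 2) (2 * b)) :
    x ^ r ≤ 2 ^ |r| * b ^ r := by
  rcases le_or_gt 0 r with hr | hr
  · calc x ^ r ≤ (2 * b) ^ r := rpow_le_rpow (by linarith [hx.1]) hx.2 hr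
      _ = 2 ^ |r| * b ^ r := by rw [mul_rpow zero_le_two hb.le, abs_of_nonneg hr]
  · calc x ^ r ≤ (b / 2) ^ r := rpow_le_rpow_of_nonpos (by positivity) hx.1 hr.le
      _ = 2 ^ |r| * b ^ r := by
        rw [div_rpow hb.le zero_le_two, abs_of_neg hr, rpow_neg zero_le_two, div_eq_inv_mul]

theorem abs_rpow_sub_rpow_le {b x : ℝ} (r : ℝ) (hb : 0 < b) (hx : x ∈ Icc (b / 2) (2 * b)) :
    |x ^ r - b ^ r| ≤ |r| * 2 ^ |r - 1| * b ^ (r - 1) * |x - b| := by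
  have hpos : ∀ y ∈ Icc (b / 2) (2 * b), 0 < y := fun y hy => by linarith [hy.1]
  refine Convex.norm_image_sub_le_of_norm_hasDerivWithin_le
    (fun y hy => (hasDerivAt_rpow_const (Or.inl (hpos y hy).ne')).hasDerivWithinAt)
    (fun y hy => ?_) (convex_Icc _ _) ⟨by linarith, by linarith⟩ hx
  rw [Real.norm_eq_abs, abs_mul, abs_of_pos (rpow_pos_of_pos (hpos y hy) _), mul_assoc]
  exact mul_le_mul_of_nonneg_left (rpow_le_two_rpow_abs_mul_rpow _ hb hy) (abs_nonneg r)

theorem abs_add_rpow_sub_one_sub_le {b a : ℝ} (p : ℝ) (hb : 0 < b) (ha : |a| ≤ b / 2) :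
    |(b + a) ^ (p - 1) - b ^ (p - 1) - (p - 1) * b ^ (p - 2) * a|
      ≤ |p - 1| * |p - 2| * 2 ^ |p - 3| * (b ^ (p - 3) * a ^ 2) := by
  have hmem : ∀ x ∈ uIcc b (b + a), x ∈ Icc (b / 2) (2 * b) ∧ |x - b| ≤ |a| := by
    intro x hx
    have hxb : |x - b| ≤ |a| := by simpa using abs_sub_left_of_mem_uIcc hx
    have := abs_le.mp hxb
    exact ⟨⟨by linarith, by linarith⟩, hxb⟩
  have key := Convex.norm_image_sub_le_of_norm_hasDerivWithin_le
    (f := fun x => x ^ (p - 1) - (p - 1) * b ^ (p - 2) * x)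
    (f' := fun x => (p - 1) * x ^ (p - 2) - (p - 1) * b ^ (p - 2))
    (C := |p - 1| * |p - 2| * 2 ^ |p - 3| * b ^ (p - 3) * |a|)
    (fun x hx => by
      have hx0 : x ≠ 0 := by linarith [(hmem x hx).1.1]
      have hd := (hasDerivAt_rpow_const (p := p - 1) (Or.inl hx0)).sub
        ((hasDerivAt_id x).const_mul ((p - 1) * b ^ (p - 2)))
      rw [show p - 1 - 1 = p - 2 by ring, mul_one] at hd
      exact hd.hasDerivWithinAt)
    (fun x hx => by
      obtain ⟨hxI, hxb⟩ := hmem x hx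
      have h := abs_rpow_sub_rpow_le (p - 2) hb hxI
      rw [show p - 2 - 1 = p - 3 by ring] at h
      rw [Real.norm_eq_abs, ← mul_sub, abs_mul, mul_assoc |p - 1|, mul_assoc |p - 1|,
        mul_assoc |p - 1|]
      gcongr
      exact h.trans (by gcongr))
    (convex_uIcc _ _) left_mem_uIcc right_mem_uIcc
  simp only [Real.norm_eq_abs, add_sub_cancel_left] at key
  calc |(b + a) ^ (p - 1) - b ^ (p - 1) - (p - 1) * b ^ (p - 2) * a|
      = |(b + a) ^ (p - 1) - (p - 1) * b ^ (p - 2) * (b + a)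
          - (b ^ (p - 1) - (p - 1) * b ^ (p - 2) * b)| := by ring_nf
    _ ≤ |p - 1| * |p - 2| * 2 ^ |p - 3| * b ^ (p - 3) * |a| * |a| := key
    _ = |p - 1| * |p - 2| * 2 ^ |p - 3| * (b ^ (p - 3) * a ^ 2) := by
        rw [mul_assoc _ |a|, abs_mul_abs_self, sq]; ring

theorem abs_max_add_rpow_sub_one_sub_le {b a p : ℝ} (hp : 2 ≤ p) (hb : 0 ≤ b)
    (hba : b ≤ 2 * |a|) :
    |max (b + a) 0 ^ (p - 1) - b ^ (p - 1) - (p - 1) * b ^ (p - 2) * a|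
      ≤ (3 ^ (p - 1) + 2 ^ (p - 1) + (p - 1) * 2 ^ (p - 2)) * |a| * |a| ^ (p - 2) := by
  have hpow : |a| ^ (p - 1) = |a| * |a| ^ (p - 2) := by
    rw [mul_comm, ← rpow_add_one' (abs_nonneg a) (by linarith)]; ring_nf
  have h₁ : max (b + a) 0 ^ (p - 1) ≤ 3 ^ (p - 1) * |a| ^ (p - 1) := by
    rw [← mul_rpow zero_le_three (abs_nonneg a)]
    exact rpow_le_rpow (le_max_right _ _)
      (max_le (by linarith [le_abs_self a]) (by positivity)) (by linarith)
  have h₂ : b ^ (p - 1) ≤ 2 ^ (p - 1) * |a| ^ (p - 1) := by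
    rw [← mul_rpow zero_le_two (abs_nonneg a)]
    exact rpow_le_rpow hb hba (by linarith)
  have h₃ : b ^ (p - 2) * |a| ≤ 2 ^ (p - 2) * |a| ^ (p - 1) := by
    calc b ^ (p - 2) * |a| ≤ (2 * |a|) ^ (p - 2) * |a| := by gcongr
      _ = 2 ^ (p - 2) * |a| ^ (p - 1) := by
        rw [mul_rpow zero_le_two (abs_nonneg a), hpow]; ring
  calc |max (b + a) 0 ^ (p - 1) - b ^ (p - 1) - (p - 1) * b ^ (p - 2) * a|
      ≤ |max (b + a) 0 ^ (p - 1)| + |b ^ (p - 1)| + |(p - 1) * b ^ (p - 2) * a| :=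
        (abs_sub _ _).trans (by gcongr; exact abs_sub _ _)
    _ = max (b + a) 0 ^ (p - 1) + b ^ (p - 1) + (p - 1) * (b ^ (p - 2) * |a|) := by
        rw [abs_of_nonneg (by positivity), abs_of_nonneg (by positivity), abs_mul, abs_mul,
          abs_of_nonneg (by linarith : 0 ≤ p - 1), abs_of_nonneg (by positivity), mul_assoc]
    _ ≤ 3 ^ (p - 1) * |a| ^ (p - 1) + 2 ^ (p - 1) * |a| ^ (p - 1)
          + (p - 1) * (2 ^ (p - 2) * |a| ^ (p - 1)) := by gcongr; linarith
    _ = (3 ^ (p - 1) + 2 ^ (p - 1) + (p - 1) * 2 ^ (p - 2)) * |a| * |a| ^ (p - 2) := by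
        rw [hpow]; ring

theorem rpow_mul_sq_le_mul_rpow_mul_rpow {b x s t θ : ℝ} (hb : 0 < b) (hx : 0 ≤ x)
    (hxb : x ≤ b) (hθ : θ ≤ 1) (hst : s + 1 = t + θ) : b ^ s * x ^ 2 ≤ x * (b ^ t * x ^ θ) := by
  rcases hx.eq_or_lt with rfl | hx
  · simp
  have hsplit : x ^ (1 - θ) * x ^ θ = x := by rw [← rpow_add hx, sub_add_cancel, rpow_one]
  calc b ^ s * x ^ 2 = b ^ s * x ^ (1 - θ) * (x * x ^ θ) := by
        linear_combination -(b ^ s * x) * hsplit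
    _ ≤ b ^ s * b ^ (1 - θ) * (x * x ^ θ) := by gcongr
    _ = x * (b ^ t * x ^ θ) := by
        rw [← rpow_add hb, show s + (1 - θ) = t by linarith]; ring

theorem pointwise_estimate_one (p : ℝ) (hp : 2 < p) :
    ∃ C > (0 : ℝ), ∃ θ : ℝ, 0 < θ ∧ θ < min 1 (p - 2) ∧
      ∀ b : ℝ, 0 < b → ∀ a : ℝ,
        |max (b + a) 0 ^ (p - 1) - b ^ (p - 1) - (p - 1) * b ^ (p - 2) * a|
          ≤ C * |a| * (|a| ^ (p - 2) + b ^ (p - 2 - θ) * |a| ^ θ) := by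
  obtain ⟨θ, hθ₀, hθ⟩ := exists_between (lt_min one_pos (by linarith) : 0 < min 1 (p - 2))
  set K₁ : ℝ := 3 ^ (p - 1) + 2 ^ (p - 1) + (p - 1) * 2 ^ (p - 2)
  set K₂ : ℝ := |p - 1| * |p - 2| * 2 ^ |p - 3|
  have hK₁ : 0 < K₁ := by
    have : 0 < p - 1 := by linarith
    positivity
  have hK₂ : 0 ≤ K₂ := by positivity
  refine ⟨K₁ + K₂, add_pos_of_pos_of_nonneg hK₁ hK₂, θ, hθ₀, hθ, fun b hb a => ?_⟩
  have hA : 0 ≤ |a| ^ (p - 2) := by positivity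
  have hB : 0 ≤ b ^ (p - 2 - θ) * |a| ^ θ := by positivity
  rcases le_or_gt b (2 * |a|) with hba | hab
  · calc _ ≤ K₁ * |a| * |a| ^ (p - 2) := abs_max_add_rpow_sub_one_sub_le hp.le hb.le hba
      _ ≤ (K₁ + K₂) * |a| * (|a| ^ (p - 2) + b ^ (p - 2 - θ) * |a| ^ θ) := by
        gcongr <;> linarith
  · rw [max_eq_left (by linarith [neg_abs_le a])]
    calc _ ≤ K₂ * (b ^ (p - 3) * a ^ 2) := abs_add_rpow_sub_one_sub_le p hb (by linarith)
      _ ≤ K₂ * (|a| * (b ^ (p - 2 - θ) * |a| ^ θ)) := by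
        rw [← sq_abs a]
        exact mul_le_mul_of_nonneg_left (rpow_mul_sq_le_mul_rpow_mul_rpow hb (abs_nonneg a)
          (by linarith) (hθ.le.trans (min_le_left _ _)) (by ring)) hK₂
      _ ≤ (K₁ + K₂) * |a| * (|a| ^ (p - 2) + b ^ (p - 2 - θ) * |a| ^ θ) := by
        rw [← mul_assoc]
        gcongr <;> linarith
end

section
/- Let p > 2 be a real number. There exist a constant C > 0 and an exponent θ with 0 < θ < min(1, p−2) such that for all b > 0 and a₁, a₂ ∈ ℝ: |max(b+a₁,0)^{p-1} − max(b+a₂,0)^{p-1} − (p−1)b^{p-2}(a₁−a₂)| ≤ C·|a₁−a₂|·(b^{p-2-θ}|a₁|^{θ} + |a₁|^{p-2} + b^{p-2-θ}|a₂|^{θ} + |a₂|^{p-2}). -/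
/-!
Write `r = p - 2` and `θ = min 1 r / 2`. Since `p - 1 > 1`, the map `a ↦ max (b + a) 0 ^ (p - 1)`
is `C¹` with derivative `(p - 1) * max (b + a) 0 ^ r`, so by the mean value theorem the left-hand
side is at most `|a₁ - a₂|` times the supremum of `(p - 1) * |max (b + a) 0 ^ r - b ^ r|` for `a`
between `a₁` and `a₂`. For `|a| ≥ b` both powers are at most `(2 |a|) ^ r`. For `|a| ≤ b`, the
`r`-Hölder continuity of `t ^ r` (if `r ≤ 1`) or its Lipschitz bound on `[0, 2b]` (if `r ≥ 1`)
gives `|a| ^ r` resp. `b ^ (r - 1) * |a|`, and each is at most `b ^ (r - θ) * |a| ^ θ` because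
`|a| ≤ b` and `θ ≤ min 1 r`.
-/

open Real Set

namespace Real

lemma abs_rpow_sub_rpow_le_of_le_one {r x y : ℝ} (hr₀ : 0 ≤ r) (hr₁ : r ≤ 1) (hx : 0 ≤ x)
    (hy : 0 ≤ y) : |x ^ r - y ^ r| ≤ |x - y| ^ r := by
  wlog hyx : y ≤ x generalizing x y
  · rw [abs_sub_comm, abs_sub_comm x]
    exact this hy hx (le_of_not_ge hyx)
  have hsub : x ^ r ≤ y ^ r + (x - y) ^ r := by
    simpa using rpow_add_le_add_rpow hy (sub_nonneg.2 hyx) hr₀ hr₁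
  rw [abs_of_nonneg (sub_nonneg.2 (rpow_le_rpow hy hyx hr₀)), abs_of_nonneg (sub_nonneg.2 hyx)]
  linarith

lemma abs_rpow_sub_rpow_le_mul_of_one_le {r M x y : ℝ} (hr : 1 ≤ r) (hx : x ∈ Icc 0 M)
    (hy : y ∈ Icc 0 M) : |x ^ r - y ^ r| ≤ r * M ^ (r - 1) * |x - y| := by
  have hderiv : ∀ t ∈ Icc 0 M, HasDerivWithinAt (· ^ r) (r * t ^ (r - 1)) (Icc 0 M) t :=
    fun t _ ↦ (hasDerivAt_rpow_const (Or.inr hr)).hasDerivWithinAt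
  have hbound : ∀ t ∈ Icc 0 M, ‖r * t ^ (r - 1)‖ ≤ r * M ^ (r - 1) := by
    intro t ht
    rw [norm_mul, norm_of_nonneg (by linarith), norm_of_nonneg (rpow_nonneg ht.1 _)]
    exact mul_le_mul_of_nonneg_left (rpow_le_rpow ht.1 ht.2 (by linarith)) (by linarith)
  simpa only [norm_eq_abs] using
    (convex_Icc 0 M).norm_image_sub_le_of_norm_hasDerivWithin_le hderiv hbound hy hx

lemma rpow_le_rpow_sub_mul_rpow {d b e θ : ℝ} (hθ : 0 < θ) (hθe : θ ≤ e) (hd : 0 ≤ d)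
    (hdb : d ≤ b) : d ^ e ≤ b ^ (e - θ) * d ^ θ := by
  calc d ^ e = d ^ (e - θ) * d ^ θ := by
        rw [← rpow_add' hd (by rw [sub_add_cancel]; exact (hθ.trans_le hθe).ne'), sub_add_cancel]
    _ ≤ b ^ (e - θ) * d ^ θ := by gcongr

end Real

lemma abs_add_rpow_sub_rpow_le_of_abs_le {r θ a b : ℝ} (hθ : 0 < θ) (hθ₁ : θ ≤ 1) (hθr : θ ≤ r)
    (hab : |a| ≤ b) : |(b + a) ^ r - b ^ r| ≤ (r + 1) * 2 ^ r * (b ^ (r - θ) * |a| ^ θ) := by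
  have hb : 0 ≤ b := (abs_nonneg a).trans hab
  have hba : 0 ≤ b + a := by linarith [neg_abs_le a]
  have hone : (1 : ℝ) ≤ 2 ^ r := one_le_rpow one_le_two (hθ.le.trans hθr)
  rcases le_total r 1 with hr₁ | hr₁
  · calc |(b + a) ^ r - b ^ r| ≤ |a| ^ r := by
          simpa using abs_rpow_sub_rpow_le_of_le_one (hθ.le.trans hθr) hr₁ hba hb
      _ ≤ b ^ (r - θ) * |a| ^ θ := rpow_le_rpow_sub_mul_rpow hθ hθr (abs_nonneg a) hab
      _ ≤ (r + 1) * 2 ^ r * (b ^ (r - θ) * |a| ^ θ) := by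
          refine le_mul_of_one_le_left (by positivity) ?_
          nlinarith
  · have hpow : b ^ (r - 1) * |a| ≤ b ^ (r - θ) * |a| ^ θ := by
      calc b ^ (r - 1) * |a| ≤ b ^ (r - 1) * (b ^ (1 - θ) * |a| ^ θ) := by
            gcongr
            simpa using rpow_le_rpow_sub_mul_rpow hθ hθ₁ (abs_nonneg a) hab
        _ = b ^ (r - θ) * |a| ^ θ := by
            rw [← mul_assoc, ← rpow_add_of_nonneg hb (by linarith) (by linarith)]
            ring_nf
    calc |(b + a) ^ r - b ^ r| ≤ r * (2 * b) ^ (r - 1) * |a| := by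
          simpa using abs_rpow_sub_rpow_le_mul_of_one_le hr₁
            ⟨hba, by linarith [le_abs_self a]⟩ ⟨hb, by linarith⟩
      _ = r * 2 ^ (r - 1) * (b ^ (r - 1) * |a|) := by
          rw [mul_rpow zero_le_two hb]
          ring
      _ ≤ r * 2 ^ r * (b ^ (r - θ) * |a| ^ θ) := by
          gcongr
          · exact one_le_two
          · linarith
      _ ≤ (r + 1) * 2 ^ r * (b ^ (r - θ) * |a| ^ θ) := by
          gcongr
          linarith

lemma abs_max_add_rpow_sub_rpow_le_of_le_abs {r a b : ℝ} (hr : 0 ≤ r) (hb : 0 ≤ b)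
    (hba : b ≤ |a|) : |max (b + a) 0 ^ r - b ^ r| ≤ 2 ^ r * |a| ^ r := by
  rw [← mul_rpow zero_le_two (abs_nonneg a)]
  refine abs_sub_le_of_nonneg_of_le (by positivity) ?_ (by positivity) ?_
  · exact rpow_le_rpow (le_max_right _ _)
      (max_le (by linarith [le_abs_self a]) (by positivity)) hr
  · exact rpow_le_rpow hb (by linarith) hr

lemma abs_max_add_rpow_sub_rpow_le {r θ a b : ℝ} (hθ : 0 < θ) (hθ₁ : θ ≤ 1) (hθr : θ ≤ r)
    (hb : 0 ≤ b) :
    |max (b + a) 0 ^ r - b ^ r| ≤ (r + 1) * 2 ^ r * (b ^ (r - θ) * |a| ^ θ + |a| ^ r) := by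
  have hr : 0 ≤ r := hθ.le.trans hθr
  rcases le_total |a| b with hab | hba
  · rw [max_eq_left (by linarith [neg_abs_le a])]
    refine (abs_add_rpow_sub_rpow_le_of_abs_le hθ hθ₁ hθr hab).trans ?_
    gcongr
    exact le_add_of_nonneg_right (by positivity)
  · calc |max (b + a) 0 ^ r - b ^ r| ≤ 2 ^ r * |a| ^ r :=
          abs_max_add_rpow_sub_rpow_le_of_le_abs hr hb hba
      _ ≤ (r + 1) * 2 ^ r * (b ^ (r - θ) * |a| ^ θ + |a| ^ r) := by
          refine mul_le_mul ?_ (le_add_of_nonneg_left (by positivity)) (by positivity)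
            (by positivity)
          exact le_mul_of_one_le_left (by positivity) (by linarith)

lemma hasDerivAt_max_zero_rpow {q : ℝ} (hq : 1 < q) (t : ℝ) :
    HasDerivAt (fun s ↦ max s 0 ^ q) (q * max t 0 ^ (q - 1)) t := by
  have off_zero : ∀ t ≠ 0, HasDerivAt (fun s ↦ max s 0 ^ q) (q * max t 0 ^ (q - 1)) t := by
    intro t ht
    rcases ht.lt_or_gt with hneg | hpos
    · have hloc : (fun s ↦ max s 0 ^ q) =ᶠ[nhds t] fun _ ↦ 0 := by
        filter_upwards [Iio_mem_nhds hneg] with s hs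
        rw [max_eq_right (le_of_lt hs), zero_rpow (by linarith)]
      rw [max_eq_right hneg.le, zero_rpow (by linarith), mul_zero]
      exact (hasDerivAt_const t 0).congr_of_eventuallyEq hloc
    · have hloc : (fun s ↦ max s 0 ^ q) =ᶠ[nhds t] fun s ↦ s ^ q := by
        filter_upwards [Ioi_mem_nhds hpos] with s hs
        rw [max_eq_left (le_of_lt hs)]
      rw [max_eq_left hpos.le]
      exact (hasDerivAt_rpow_const (Or.inr hq.le)).congr_of_eventuallyEq hloc
  rcases eq_or_ne t 0 with rfl | ht
  · have hcont : ∀ e : ℝ, 0 ≤ e → Continuous fun s : ℝ ↦ max s 0 ^ e := fun e he ↦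
      Continuous.rpow_const (by fun_prop) fun _ ↦ Or.inr he
    exact hasDerivAt_of_hasDerivAt_of_ne off_zero (hcont q (by linarith)).continuousAt
      ((hcont (q - 1) (by linarith)).continuousAt.const_mul q)
  · exact off_zero t ht

lemma abs_max_add_rpow_sub_sub_le {q b K a₁ a₂ : ℝ} (hq : 1 < q)
    (hK : ∀ a ∈ uIcc a₁ a₂, q * |max (b + a) 0 ^ (q - 1) - b ^ (q - 1)| ≤ K) :
    |max (b + a₁) 0 ^ q - max (b + a₂) 0 ^ q - q * b ^ (q - 1) * (a₁ - a₂)| ≤ K * |a₁ - a₂| := by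
  have hderiv : ∀ a, HasDerivAt (fun a ↦ max (b + a) 0 ^ q - q * b ^ (q - 1) * a)
      (q * max (b + a) 0 ^ (q - 1) - q * b ^ (q - 1)) a := fun a ↦ by
    exact (((hasDerivAt_max_zero_rpow hq (b + a)).comp_const_add b a).sub
      ((hasDerivAt_id' a).const_mul (q * b ^ (q - 1)))).congr_deriv (by rw [mul_one])
  have hbound : ∀ a ∈ uIcc a₂ a₁,
      ‖q * max (b + a) 0 ^ (q - 1) - q * b ^ (q - 1)‖ ≤ K := fun a ha ↦ by
    rw [norm_eq_abs, ← mul_sub, abs_mul, abs_of_pos (by linarith)]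
    exact hK a (uIcc_comm a₂ a₁ ▸ ha)
  have := (convex_uIcc a₂ a₁).norm_image_sub_le_of_norm_hasDerivWithin_le
    (fun a _ ↦ (hderiv a).hasDerivWithinAt) hbound left_mem_uIcc right_mem_uIcc
  rw [norm_eq_abs, norm_eq_abs] at this
  convert this using 2
  ring

lemma rpow_abs_le_add_of_mem_uIcc {e a a₁ a₂ : ℝ} (he : 0 ≤ e) (ha : a ∈ uIcc a₁ a₂) :
    |a| ^ e ≤ |a₁| ^ e + |a₂| ^ e := by
  have hmax : |a| ≤ max |a₁| |a₂| := by
    rcases mem_uIcc.1 ha with h | h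
    · exact abs_le_max_abs_abs h.1 h.2
    · exact max_comm |a₂| |a₁| ▸ abs_le_max_abs_abs h.1 h.2
  refine (rpow_le_rpow (abs_nonneg a) hmax he).trans ?_
  rcases le_total |a₁| |a₂| with h | h
  · rw [max_eq_right h]
    exact le_add_of_nonneg_left (by positivity)
  · rw [max_eq_left h]
    exact le_add_of_nonneg_right (by positivity)

theorem pointwise_estimate_two (p : ℝ) (hp : 2 < p) :
    ∃ C > (0 : ℝ), ∃ θ : ℝ, 0 < θ ∧ θ < min 1 (p - 2) ∧
      ∀ b : ℝ, 0 < b → ∀ a₁ a₂ : ℝ,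
        |max (b + a₁) 0 ^ (p - 1) - max (b + a₂) 0 ^ (p - 1)
            - (p - 1) * b ^ (p - 2) * (a₁ - a₂)|
          ≤ C * |a₁ - a₂| *
              (b ^ (p - 2 - θ) * |a₁| ^ θ + |a₁| ^ (p - 2)
                + b ^ (p - 2 - θ) * |a₂| ^ θ + |a₂| ^ (p - 2)) := by
  have hr : 0 < p - 2 := by linarith
  have hmin : 0 < min 1 (p - 2) := lt_min one_pos hr
  set θ := min 1 (p - 2) / 2 with hθ
  have hθ₁ : θ ≤ 1 := by linarith [min_le_left 1 (p - 2)]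
  have hθr : θ ≤ p - 2 := by linarith [min_le_right 1 (p - 2)]
  have hp₁ : p - 1 - 1 = p - 2 := by ring
  refine ⟨(p - 1) * ((p - 2 + 1) * 2 ^ (p - 2)), mul_pos (by linarith) (by positivity), θ,
    by positivity, half_lt_self hmin, fun b hb a₁ a₂ ↦ ?_⟩
  have hK : ∀ a ∈ uIcc a₁ a₂, (p - 1) * |max (b + a) 0 ^ (p - 1 - 1) - b ^ (p - 1 - 1)| ≤
      (p - 1) * ((p - 2 + 1) * 2 ^ (p - 2)) * (b ^ (p - 2 - θ) * |a₁| ^ θ + |a₁| ^ (p - 2)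
        + b ^ (p - 2 - θ) * |a₂| ^ θ + |a₂| ^ (p - 2)) := fun a ha ↦ by
    have hθa := rpow_abs_le_add_of_mem_uIcc (e := θ) (by positivity) ha
    have hra := rpow_abs_le_add_of_mem_uIcc hr.le ha
    rw [hp₁, mul_assoc]
    gcongr
    · linarith
    refine (abs_max_add_rpow_sub_rpow_le (by positivity) hθ₁ hθr hb.le).trans
      (mul_le_mul_of_nonneg_left ?_ (mul_nonneg (by linarith) (by positivity)))
    linarith [mul_le_mul_of_nonneg_left hθa (rpow_nonneg hb.le (p - 2 - θ))]
  have := abs_max_add_rpow_sub_sub_le (by linarith) hK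
  rw [hp₁] at this
  linarith
end

section
/- Let n > 2k, γ ∈ (0, n), β ∈ (0, n], with β < γ, and μ > 0. There exists C > 0, independent of μ, such that for all x ∈ ℝⁿ: ∫_{ℝⁿ, |z−x| ≤ 1} (μ + |x−z|)^{-γ} |z − y|^{β−n} dz ≤ C (μ + |x−y|)^{β−γ} for all y with |x−y| ≤ 1/2, when γ < n (the subcritical case of Giraud's lemma with μ-regularized kernel). -/
/-!
Put `d = μ + |x - y|` and split the domain at the ball `B(y, d/2)`. On this ball
`μ + |x - z| ≥ d/2`, and `|z - y|^{β-n}` integrates to `(d/2)^β / β`. Off it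
`d + |z - x| ≤ 5 |z - y|`, so the integrand is at most `5^{n-β} |z - x|^{-γ} (d + |z - x|)^{β-n}`.
In polar coordinates about `x`, split at radius `d`, the integral of this over all of `ℝⁿ` is
at most `(1/(n-γ) + 1/(γ-β)) d^{β-γ}`: `γ < n` makes it converge at `x` and `β < γ` at infinity.
-/

open MeasureTheory Measure Metric Set
open scoped ENNReal

local notation "dim" => Module.finrank ℝ

section Pointwise

variable {E : Type*} [NormedAddCommGroup E] {a γ β m : ℝ} {x y z : E}

theorem rpow_neg_add_norm_sub_le_of_norm_sub_le (hγ : 0 ≤ γ) (hd : 0 < a + ‖x - y‖)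
    (hz : ‖z - y‖ ≤ (a + ‖x - y‖) / 2) :
    (a + ‖x - z‖) ^ (-γ) ≤ ((a + ‖x - y‖) / 2) ^ (-γ) :=
  Real.rpow_le_rpow_of_nonpos (by positivity)
    (by linarith [norm_sub_le_norm_sub_add_norm_sub x z y]) (by linarith)

theorem add_norm_sub_le_five_mul_norm_sub (ha : 0 ≤ a) (hz : (a + ‖x - y‖) / 2 < ‖z - y‖) :
    a + ‖x - y‖ + ‖z - x‖ ≤ 5 * ‖z - y‖ := by
  linarith [norm_sub_le_norm_sub_add_norm_sub z y x, norm_sub_rev y x]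

theorem rpow_neg_add_norm_sub_mul_rpow_le_of_lt_norm_sub (ha : 0 ≤ a) (hγ : 0 ≤ γ) (hβm : β ≤ m)
    (hzx : z ≠ x) (hz : (a + ‖x - y‖) / 2 < ‖z - y‖) :
    (a + ‖x - z‖) ^ (-γ) * ‖z - y‖ ^ (β - m) ≤
      5 ^ (m - β) * (‖z - x‖ ^ (-γ) * (a + ‖x - y‖ + ‖z - x‖) ^ (β - m)) := by
  have hzx : 0 < ‖z - x‖ := norm_pos_iff.2 (sub_ne_zero.2 hzx)
  have h5 := add_norm_sub_le_five_mul_norm_sub ha hz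
  have hpow : (5 : ℝ) ^ (m - β) = ((5 : ℝ) ^ (β - m))⁻¹ := by
    rw [← Real.rpow_neg (by norm_num), neg_sub]
  calc (a + ‖x - z‖) ^ (-γ) * ‖z - y‖ ^ (β - m)
      ≤ ‖z - x‖ ^ (-γ) * ((a + ‖x - y‖ + ‖z - x‖) / 5) ^ (β - m) := by
        gcongr ?_ * ?_
        · exact Real.rpow_le_rpow_of_nonpos hzx (by rw [norm_sub_rev]; linarith) (by linarith)
        · exact Real.rpow_le_rpow_of_nonpos (by positivity) (by linarith) (by linarith)
    _ = 5 ^ (m - β) * (‖z - x‖ ^ (-γ) * (a + ‖x - y‖ + ‖z - x‖) ^ (β - m)) := by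
        rw [Real.div_rpow (by positivity) (by norm_num), hpow]
        ring

end Pointwise

section RadialProfile

variable {m γ β d : ℝ}

theorem lintegral_Ioc_rpow_sub_one {s R : ℝ} (hs : 0 < s) (hR : 0 ≤ R) :
    ∫⁻ r in Ioc 0 R, ENNReal.ofReal (r ^ (s - 1)) = ENNReal.ofReal (R ^ s / s) := by
  rw [← ofReal_integral_eq_lintegral_ofReal
      (intervalIntegral.intervalIntegrable_rpow' (by linarith : (-1 : ℝ) < s - 1)).1
      (ae_restrict_of_forall_mem measurableSet_Ioc fun r hr => Real.rpow_nonneg hr.1.le _),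
    ← intervalIntegral.integral_of_le hR, integral_rpow (Or.inl (by linarith)), sub_add_cancel,
    Real.zero_rpow hs.ne', sub_zero]

theorem lintegral_Ioi_rpow_of_lt {a : ℝ} (ha : a < -1) (hd : 0 < d) :
    ∫⁻ r in Ioi d, ENNReal.ofReal (r ^ a) = ENNReal.ofReal (-d ^ (a + 1) / (a + 1)) := by
  rw [← ofReal_integral_eq_lintegral_ofReal (integrableOn_Ioi_rpow_of_lt ha hd)
      (ae_restrict_of_forall_mem measurableSet_Ioi fun r hr => Real.rpow_nonneg (hd.trans hr).le _),
    integral_Ioi_rpow_of_lt ha hd]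

theorem lintegral_Ioc_rpow_mul_rpow_add_le (hγm : γ < m) (hβm : β ≤ m) (hd : 0 < d) :
    ∫⁻ r in Ioc 0 d, ENNReal.ofReal (r ^ (m - 1)) * ENNReal.ofReal (r ^ (-γ) * (d + r) ^ (β - m))
      ≤ ENNReal.ofReal (d ^ (β - γ) / (m - γ)) := by
  calc ∫⁻ r in Ioc 0 d, ENNReal.ofReal (r ^ (m - 1)) * ENNReal.ofReal (r ^ (-γ) * (d + r) ^ (β - m))
      ≤ ∫⁻ r in Ioc 0 d, ENNReal.ofReal (d ^ (β - m)) * ENNReal.ofReal (r ^ ((m - γ) - 1)) := by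
        refine setLIntegral_mono' measurableSet_Ioc fun r hr => ?_
        have hr : 0 < r := hr.1
        rw [← ENNReal.ofReal_mul (by positivity), ← ENNReal.ofReal_mul (by positivity)]
        refine ENNReal.ofReal_le_ofReal ?_
        calc r ^ (m - 1) * (r ^ (-γ) * (d + r) ^ (β - m))
            = (d + r) ^ (β - m) * r ^ ((m - γ) - 1) := by
              rw [← mul_assoc, ← Real.rpow_add hr]; ring_nf
          _ ≤ d ^ (β - m) * r ^ ((m - γ) - 1) :=
              mul_le_mul_of_nonneg_right
                (Real.rpow_le_rpow_of_nonpos hd (by linarith) (by linarith)) (by positivity)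
    _ = ENNReal.ofReal (d ^ (β - γ) / (m - γ)) := by
        rw [lintegral_const_mul _ (by fun_prop), lintegral_Ioc_rpow_sub_one (by linarith) hd.le,
          ← ENNReal.ofReal_mul (by positivity), ← mul_div_assoc, ← Real.rpow_add hd]
        ring_nf

theorem lintegral_Ioi_rpow_mul_rpow_add_le (hβγ : β < γ) (hβm : β ≤ m) (hd : 0 < d) :
    ∫⁻ r in Ioi d, ENNReal.ofReal (r ^ (m - 1)) * ENNReal.ofReal (r ^ (-γ) * (d + r) ^ (β - m))
      ≤ ENNReal.ofReal (d ^ (β - γ) / (γ - β)) := by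
  calc ∫⁻ r in Ioi d, ENNReal.ofReal (r ^ (m - 1)) * ENNReal.ofReal (r ^ (-γ) * (d + r) ^ (β - m))
      ≤ ∫⁻ r in Ioi d, ENNReal.ofReal (r ^ (β - γ - 1)) := by
        refine setLIntegral_mono' measurableSet_Ioi fun r hr => ?_
        have hr : 0 < r := hd.trans hr
        rw [← ENNReal.ofReal_mul (by positivity)]
        refine ENNReal.ofReal_le_ofReal ?_
        calc r ^ (m - 1) * (r ^ (-γ) * (d + r) ^ (β - m))
            ≤ r ^ (m - 1) * (r ^ (-γ) * r ^ (β - m)) := by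
              gcongr r ^ (m - 1) * (r ^ (-γ) * ?_)
              exact Real.rpow_le_rpow_of_nonpos hr (by linarith) (by linarith)
          _ = r ^ (β - γ - 1) := by
              rw [← Real.rpow_add hr, ← Real.rpow_add hr]; ring_nf
    _ = ENNReal.ofReal (d ^ (β - γ) / (γ - β)) := by
        rw [lintegral_Ioi_rpow_of_lt (by linarith) hd, sub_add_cancel, neg_div, ← div_neg, neg_sub]

theorem lintegral_Ioi_zero_rpow_mul_rpow_add_le (hγm : γ < m) (hβγ : β < γ) (hd : 0 < d) :
    ∫⁻ r in Ioi 0, ENNReal.ofReal (r ^ (m - 1)) * ENNReal.ofReal (r ^ (-γ) * (d + r) ^ (β - m))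
      ≤ ENNReal.ofReal ((1 / (m - γ) + 1 / (γ - β)) * d ^ (β - γ)) := by
  have hγm' : 0 < m - γ := sub_pos.2 hγm
  have hβγ' : 0 < γ - β := sub_pos.2 hβγ
  rw [← Ioc_union_Ioi_eq_Ioi hd.le, lintegral_union measurableSet_Ioi (Ioc_disjoint_Ioi le_rfl)]
  calc _ ≤ ENNReal.ofReal (d ^ (β - γ) / (m - γ)) + ENNReal.ofReal (d ^ (β - γ) / (γ - β)) :=
        add_le_add (lintegral_Ioc_rpow_mul_rpow_add_le hγm (by linarith) hd)
          (lintegral_Ioi_rpow_mul_rpow_add_le hβγ (by linarith) hd)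
    _ = ENNReal.ofReal ((1 / (m - γ) + 1 / (γ - β)) * d ^ (β - γ)) := by
        rw [← ENNReal.ofReal_add (by positivity) (by positivity)]
        ring_nf

end RadialProfile

section Radial

variable {E : Type*} [NormedAddCommGroup E] [NormedSpace ℝ E] [MeasurableSpace E] [BorelSpace E]
  [FiniteDimensional ℝ E] [Nontrivial E] (μ : Measure E) [μ.IsAddHaarMeasure]

theorem lintegral_fun_norm_addHaar {f : ℝ → ℝ≥0∞} (hf : Measurable f) :
    ∫⁻ x, f ‖x‖ ∂μ =
      dim E * μ (ball 0 1) * ∫⁻ r in Ioi (0 : ℝ), ENNReal.ofReal (r ^ (dim E - 1)) * f r := by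
  have hf' : Measurable fun p : sphere (0 : E) 1 × Ioi (0 : ℝ) => f p.2 :=
    hf.comp (measurable_subtype_coe.comp measurable_snd)
  calc
    ∫⁻ x, f ‖x‖ ∂μ = ∫⁻ x : ({(0 : E)}ᶜ : Set E), f ‖x.1‖ ∂(μ.comap (↑)) := by
      rw [lintegral_subtype_comap (measurableSet_singleton _).compl fun x => f ‖x‖,
        restrict_compl_singleton]
    _ = ∫⁻ p : sphere (0 : E) 1 × Ioi (0 : ℝ), f p.2
        ∂(μ.toSphere.prod (volumeIoiPow (dim E - 1))) := by
      simpa only [Function.comp_def, homeomorphUnitSphereProd_apply_snd_coe] using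
        μ.measurePreserving_homeomorphUnitSphereProd.lintegral_comp hf'
    _ = μ.toSphere univ * ∫⁻ r : Ioi (0 : ℝ), f r ∂(volumeIoiPow (dim E - 1)) := by
      rw [lintegral_prod _ hf'.aemeasurable]
      simp [lintegral_const, mul_comm]
    _ = _ := by
      rw [toSphere_apply_univ, volumeIoiPow, lintegral_withDensity_eq_lintegral_mul _
          (measurable_subtype_coe.pow_const _).ennreal_ofReal (g := fun r => f r.1)
          (hf.comp measurable_subtype_coe),
        ← lintegral_subtype_comap measurableSet_Ioi]
      rfl

theorem lintegral_fun_norm_sub_addHaar {f : ℝ → ℝ≥0∞} (hf : Measurable f) (y : E) :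
    ∫⁻ z, f ‖z - y‖ ∂μ =
      dim E * μ (ball 0 1) *
        ∫⁻ r in Ioi (0 : ℝ), ENNReal.ofReal (r ^ ((dim E : ℝ) - 1)) * f r := by
  rw [lintegral_sub_right_eq_self (fun z => f ‖z‖) y, lintegral_fun_norm_addHaar μ hf]
  refine congrArg _ (setLIntegral_congr_fun measurableSet_Ioi fun r _ => ?_)
  rw [← Real.rpow_natCast, Nat.cast_sub Module.finrank_pos, Nat.cast_one]

theorem setLIntegral_closedBall_norm_sub_rpow {s R : ℝ} (hs : 0 < s) (hR : 0 ≤ R) (y : E) :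
    ∫⁻ z in closedBall y R, ENNReal.ofReal (‖z - y‖ ^ (s - dim E)) ∂μ =
      dim E * μ (ball 0 1) * ENNReal.ofReal (R ^ s / s) := by
  have hind : (closedBall y R).indicator (fun z => ENNReal.ofReal (‖z - y‖ ^ (s - dim E))) =
      fun z => (Iic R).indicator (fun r => ENNReal.ofReal (r ^ (s - dim E))) ‖z - y‖ := by
    ext z
    simp [indicator, dist_eq_norm]
  rw [← lintegral_indicator measurableSet_closedBall, hind,
    lintegral_fun_norm_sub_addHaar μ ((by fun_prop : Measurable _).indicator measurableSet_Iic)]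
  refine congrArg _ ?_
  calc ∫⁻ r in Ioi 0, ENNReal.ofReal (r ^ ((dim E : ℝ) - 1)) *
        (Iic R).indicator (fun r => ENNReal.ofReal (r ^ (s - dim E))) r
      = ∫⁻ r in Ioi 0, (Iic R).indicator (fun r => ENNReal.ofReal (r ^ (s - 1))) r := by
        refine setLIntegral_congr_fun measurableSet_Ioi fun r (hr : 0 < r) => ?_
        by_cases hrR : r ≤ R
        · simp only [indicator_of_mem (show r ∈ Iic R from hrR)]
          rw [← ENNReal.ofReal_mul (by positivity), ← Real.rpow_add hr]
          ring_nf
        · simp [hrR]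
    _ = ENNReal.ofReal (R ^ s / s) := by
        rw [lintegral_indicator measurableSet_Iic, restrict_restrict measurableSet_Iic,
          Iic_inter_Ioi, lintegral_Ioc_rpow_sub_one hs hR]

theorem lintegral_norm_sub_rpow_mul_rpow_add_norm_sub_le {γ β d : ℝ} (hγ : γ < dim E) (hβγ : β < γ)
    (hd : 0 < d) (x : E) :
    ∫⁻ z, ENNReal.ofReal (‖z - x‖ ^ (-γ) * (d + ‖z - x‖) ^ (β - dim E)) ∂μ ≤
      dim E * μ (ball 0 1) * ENNReal.ofReal ((1 / (dim E - γ) + 1 / (γ - β)) * d ^ (β - γ)) := by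
  rw [lintegral_fun_norm_sub_addHaar μ
    (f := fun r => ENNReal.ofReal (r ^ (-γ) * (d + r) ^ (β - dim E))) (by fun_prop) x]
  gcongr
  exact lintegral_Ioi_zero_rpow_mul_rpow_add_le hγ hβγ hd

theorem lintegral_rpow_neg_add_norm_sub_mul_norm_sub_rpow_le {a γ β : ℝ} (ha : 0 < a)
    (hγ0 : 0 < γ) (hγ : γ < dim E) (hβ : 0 < β) (hβγ : β < γ) (x y : E) :
    ∫⁻ z, ENNReal.ofReal ((a + ‖x - z‖) ^ (-γ) * ‖z - y‖ ^ (β - dim E)) ∂μ ≤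
      ENNReal.ofReal (dim E * μ.real (ball 0 1) *
        (2 ^ (γ - β) / β + 5 ^ ((dim E : ℝ) - β) * (1 / (dim E - γ) + 1 / (γ - β))) *
          (a + ‖x - y‖) ^ (β - γ)) := by
  set d := a + ‖x - y‖
  have hd : 0 < d := by positivity
  set K := 1 / ((dim E : ℝ) - γ) + 1 / (γ - β)
  have hc : (dim E : ℝ≥0∞) * μ (ball 0 1) = ENNReal.ofReal (dim E * μ.real (ball 0 1)) := by
    rw [ENNReal.ofReal_mul (by positivity), ENNReal.ofReal_natCast, measureReal_def,
      ENNReal.ofReal_toReal measure_ball_lt_top.ne]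
  have hnear : ∫⁻ z in closedBall y (d / 2),
      ENNReal.ofReal ((a + ‖x - z‖) ^ (-γ) * ‖z - y‖ ^ (β - dim E)) ∂μ ≤
      ENNReal.ofReal ((d / 2) ^ (-γ)) *
        (dim E * μ (ball 0 1) * ENNReal.ofReal ((d / 2) ^ β / β)) := by
    rw [← setLIntegral_closedBall_norm_sub_rpow μ hβ (by positivity) y,
      ← lintegral_const_mul' _ _ ENNReal.ofReal_ne_top]
    refine setLIntegral_mono' measurableSet_closedBall fun z hz => ?_
    rw [← ENNReal.ofReal_mul (by positivity)]
    exact ENNReal.ofReal_le_ofReal (mul_le_mul_of_nonneg_right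
      (rpow_neg_add_norm_sub_le_of_norm_sub_le hγ0.le hd (mem_closedBall_iff_norm.1 hz))
      (by positivity))
  have hfar : ∫⁻ z in (closedBall y (d / 2))ᶜ,
      ENNReal.ofReal ((a + ‖x - z‖) ^ (-γ) * ‖z - y‖ ^ (β - dim E)) ∂μ ≤
      ENNReal.ofReal (5 ^ ((dim E : ℝ) - β)) *
        (dim E * μ (ball 0 1) * ENNReal.ofReal (K * d ^ (β - γ))) := by
    grw [← lintegral_norm_sub_rpow_mul_rpow_add_norm_sub_le μ hγ hβγ hd x]
    rw [← lintegral_const_mul' _ _ ENNReal.ofReal_ne_top]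
    refine (setLIntegral_mono_ae' measurableSet_closedBall.compl ?_).trans
      (setLIntegral_le_lintegral _ _)
    -- `0 ^ (-γ) = 0` in Lean, so the pointwise bound fails at `z = x`
    filter_upwards [Measure.ae_ne μ x] with z hzx hz
    rw [← ENNReal.ofReal_mul (by positivity)]
    exact ENNReal.ofReal_le_ofReal (rpow_neg_add_norm_sub_mul_rpow_le_of_lt_norm_sub ha.le hγ0.le
      (by linarith) hzx (by simpa [dist_eq_norm] using hz))
  have hhalf : (d / 2) ^ (-γ) * ((d / 2) ^ β / β) = 2 ^ (γ - β) / β * d ^ (β - γ) := by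
    have h2 : (2 : ℝ) ^ (γ - β) = ((2 : ℝ) ^ (β - γ))⁻¹ := by
      rw [← Real.rpow_neg (by norm_num), neg_sub]
    rw [← mul_div_assoc, ← Real.rpow_add (by positivity), Real.div_rpow hd.le (by norm_num), h2]
    ring_nf
  calc _ = _ := (lintegral_add_compl _ measurableSet_closedBall).symm
    _ ≤ _ := add_le_add hnear hfar
    _ = _ := by
      rw [hc, ← ENNReal.ofReal_mul (by positivity), ← ENNReal.ofReal_mul (by positivity),
        ← ENNReal.ofReal_mul (by positivity), ← ENNReal.ofReal_mul (by positivity),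
        ← ENNReal.ofReal_add (by positivity) (by positivity)]
      congr 1
      linear_combination (dim E * μ.real (ball 0 1)) * hhalf

end Radial

theorem giraud_regularized_subcritical_general (n : ℕ)
    (γ β : ℝ) (hγ : γ ∈ Set.Ioo (0 : ℝ) n) (hβ : β ∈ Set.Ioc (0 : ℝ) n) (hβγ : β < γ) :
    ∃ C > (0 : ℝ), ∀ μ : ℝ, 0 < μ →
      ∀ x y : EuclideanSpace ℝ (Fin n), ‖x - y‖ ≤ 1 / 2 →
        (∫ z in Metric.closedBall x 1,
            (μ + ‖x - z‖) ^ (-γ) * ‖z - y‖ ^ (β - n))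
          ≤ C * (μ + ‖x - y‖) ^ (β - γ) := by
  have hn : (0 : ℝ) < n := hγ.1.trans hγ.2
  have : Nontrivial (EuclideanSpace ℝ (Fin n)) := by
    have : Nonempty (Fin n) := ⟨⟨0, by exact_mod_cast hn⟩⟩
    infer_instance
  have hball : 0 < volume.real (ball (0 : EuclideanSpace ℝ (Fin n)) 1) :=
    ENNReal.toReal_pos (measure_ball_pos volume 0 one_pos).ne' measure_ball_lt_top.ne
  have hnγ := sub_pos.2 hγ.2
  have hγβ := sub_pos.2 hβγ
  have hβ0 := hβ.1
  refine ⟨n * volume.real (ball (0 : EuclideanSpace ℝ (Fin n)) 1) *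
    (2 ^ (γ - β) / β + 5 ^ ((n : ℝ) - β) * (1 / (n - γ) + 1 / (γ - β))), by positivity,
    fun a ha x y _ => ?_⟩
  have key := lintegral_rpow_neg_add_norm_sub_mul_norm_sub_rpow_le volume ha hγ.1
    (by simpa using hγ.2) hβ0 hβγ x y
  rw [finrank_euclideanSpace_fin] at key
  rw [integral_eq_lintegral_of_nonneg_ae (ae_of_all _ fun z => by positivity) (by fun_prop)]
  exact ENNReal.toReal_le_of_le_ofReal (by positivity) ((setLIntegral_le_lintegral _ _).trans key)

/-- Giraud's lemma with `μ`-regularized kernel, local Euclidean model, subcritical case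
`β < γ < n`. -/
theorem giraud_regularized_subcritical (n k : ℕ) (hk : 1 ≤ k) (hnk : 2 * k < n)
    (γ β : ℝ) (hγ : γ ∈ Set.Ioo (0 : ℝ) n) (hβ : β ∈ Set.Ioc (0 : ℝ) n) (hβγ : β < γ) :
    ∃ C > (0 : ℝ), ∀ μ : ℝ, 0 < μ →
      ∀ x y : EuclideanSpace ℝ (Fin n), ‖x - y‖ ≤ 1 / 2 →
        (∫ z in Metric.closedBall x 1,
            (μ + ‖x - z‖) ^ (-γ) * ‖z - y‖ ^ (β - n))
          ≤ C * (μ + ‖x - y‖) ^ (β - γ) :=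
  giraud_regularized_subcritical_general n γ β hγ hβ hβγ
end
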